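/- Let τ ∈ ℂ with Im τ > 0, let N, n ≥ 1, let z₁,…,z_n ∈ ℂ, let A₁,…,A_n be N×N complex matrices with ∑_{k=1}^n (A_k)_{ii} = 0 for each i, and let P₁,…,P_N, Q₁,…,Q_N ∈ ℂ. Let z ∈ ℂ be such that θ₁(z−z_k|τ) ≠ 0 and θ₁(z+τ−z_k|τ) ≠ 0 for all k, and θ₁(Q_j−Q_i|τ) ≠ 0 for all i ≠ j. Define the N×N matrix L_z(z) by (L_z(z))_{ij} = δ_{ij}(P_i + ∑_k (θ₁'(z−z_k|τ)/θ₁(z−z_k|τ))(A_k)_{ii}) − (1−δ_{ij})·∑_k x(Q_j−Q_i, z−z_k)·(A_k)_{ij}. Then L_z(z+τ) = E⁻¹·L_z(z)·E, where E is the diagonal matrix with E_{ii} = exp(2πi Q_i). -/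

import Mathlib

open Complex


/-- The Jacobi theta function `θ₁(z|τ)` for `τ` in the upper half-plane. -/
noncomputable def theta1 (τ z : ℂ) : ℂ :=
  -Complex.I * ∑' n : ℤ, (-1 : ℂ) ^ n *
    Complex.exp ((Real.pi : ℂ) * Complex.I * τ * ((n : ℂ) + 1/2) ^ 2 +
      2 * (Real.pi : ℂ) * Complex.I * ((n : ℂ) + 1/2) * z)

lemma theta1_eq (τ z : ℂ) :
    theta1 τ z = -Complex.I * Complex.exp ((Real.pi : ℂ) * Complex.I * τ / 4
        + (Real.pi : ℂ) * Complex.I * z) * jacobiTheta₂ (z + (τ + 1) / 2) τ := by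
  have key : ∀ n : ℤ, (-1 : ℂ) ^ n *
      Complex.exp ((Real.pi : ℂ) * Complex.I * τ * ((n : ℂ) + 1/2) ^ 2 +
        2 * (Real.pi : ℂ) * Complex.I * ((n : ℂ) + 1/2) * z)
      = Complex.exp ((Real.pi : ℂ) * Complex.I * τ / 4 + (Real.pi : ℂ) * Complex.I * z) *
        jacobiTheta₂_term n (z + (τ + 1) / 2) τ := by
    intro n
    rw [jacobiTheta₂_term, ← Complex.exp_add, show ((-1 : ℂ) ^ n) = Complex.exp (n * ((Real.pi : ℂ) * I)) by
      rw [Complex.exp_int_mul, Complex.exp_pi_mul_I], ← Complex.exp_add]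
    congr 1
    ring
  rw [theta1, jacobiTheta₂, tsum_congr key, tsum_mul_left]; ring

lemma theta1_shift (τ z : ℂ) :
    theta1 τ (z + τ) = -Complex.exp (-(Real.pi : ℂ) * I * τ - 2 * (Real.pi : ℂ) * I * z) *
      theta1 τ z := by
  rw [theta1_eq, theta1_eq, show z + τ + (τ + 1) / 2 = (z + (τ + 1) / 2) + τ by ring,
    jacobiTheta₂_add_left']
  have hE : Complex.exp ((Real.pi:ℂ) * I * τ / 4 + (Real.pi:ℂ) * I * (z + τ)) *
      Complex.exp (-(Real.pi:ℂ) * I * (τ + 2 * (z + (τ + 1) / 2))) =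
      -(Complex.exp (-(Real.pi:ℂ) * I * τ - 2 * (Real.pi:ℂ) * I * z) *
        Complex.exp ((Real.pi:ℂ) * I * τ / 4 + (Real.pi:ℂ) * I * z)) := by
    rw [← Complex.exp_add, ← Complex.exp_add,
      show ((Real.pi:ℂ) * I * τ / 4 + (Real.pi:ℂ) * I * (z + τ) +
        -(Real.pi:ℂ) * I * (τ + 2 * (z + (τ + 1) / 2))) =
        (-(Real.pi:ℂ) * I * τ - 2 * (Real.pi:ℂ) * I * z +
          ((Real.pi:ℂ) * I * τ / 4 + (Real.pi:ℂ) * I * z)) + -((Real.pi:ℂ) * I) by ring,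
      Complex.exp_add, Complex.exp_neg, Complex.exp_pi_mul_I]
    norm_num
  linear_combination (-I * jacobiTheta₂ (z + (τ + 1) / 2) τ) * hE

lemma theta1_differentiable {τ : ℂ} (hτ : 0 < τ.im) : Differentiable ℂ (theta1 τ) := by
  have : theta1 τ = fun z => -Complex.I * Complex.exp ((Real.pi : ℂ) * Complex.I * τ / 4
        + (Real.pi : ℂ) * Complex.I * z) * jacobiTheta₂ (z + (τ + 1) / 2) τ := by
    funext z; exact theta1_eq τ z
  rw [this]
  intro z
  apply DifferentiableAt.mul
  · exact (differentiableAt_const _).mul (((differentiableAt_const _).add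
      ((differentiableAt_const _).mul differentiableAt_id)).cexp)
  · exact (differentiableAt_jacobiTheta₂_fst (z + (τ+1)/2) hτ).comp z
      (differentiableAt_id.add (differentiableAt_const _))

lemma deriv_theta1_shift {τ : ℂ} (hτ : 0 < τ.im) (z : ℂ) :
    deriv (theta1 τ) (z + τ) =
      -Complex.exp (-(Real.pi : ℂ) * I * τ - 2 * (Real.pi : ℂ) * I * z) *
        (deriv (theta1 τ) z - 2 * (Real.pi : ℂ) * I * theta1 τ z) := by
  have hd := theta1_differentiable hτ
  have h1 : HasDerivAt (fun w => theta1 τ (w + τ)) (deriv (theta1 τ) (z + τ)) z := by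
    simpa [Function.comp_def] using ((hd (z + τ)).hasDerivAt.comp z ((hasDerivAt_id z).add_const τ))
  have h2 : HasDerivAt (fun w => -Complex.exp (-(Real.pi : ℂ) * I * τ - 2 * (Real.pi : ℂ) * I * w)
        * theta1 τ w)
      (-Complex.exp (-(Real.pi : ℂ) * I * τ - 2 * (Real.pi : ℂ) * I * z) *
        (deriv (theta1 τ) z - 2 * (Real.pi : ℂ) * I * theta1 τ z)) z := by
    have he : HasDerivAt (fun w : ℂ => -Complex.exp (-(Real.pi : ℂ) * I * τ -
        2 * (Real.pi : ℂ) * I * w))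
        (-((-(2 * (Real.pi : ℂ) * I)) *
          Complex.exp (-(Real.pi : ℂ) * I * τ - 2 * (Real.pi : ℂ) * I * z))) z := by
      have : HasDerivAt (fun w : ℂ => -(Real.pi : ℂ) * I * τ - 2 * (Real.pi : ℂ) * I * w)
          (-(2 * (Real.pi : ℂ) * I)) z := by
        simpa using ((hasDerivAt_id z).const_mul (2 * (Real.pi : ℂ) * I)).const_sub
          (-(Real.pi : ℂ) * I * τ)
      simpa [mul_comm] using (this.cexp).fun_neg
    have := he.fun_mul (hd z).hasDerivAt
    refine this.congr_deriv ?_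
    ring
  have heq : (fun w => theta1 τ (w + τ)) = (fun w =>
      -Complex.exp (-(Real.pi : ℂ) * I * τ - 2 * (Real.pi : ℂ) * I * w) * theta1 τ w) := by
    funext w; exact theta1_shift τ w
  rw [heq] at h1
  exact h1.unique h2

/-- The Lamé function `x(ξ,z) = θ₁(z-ξ|τ)·θ₁'(0|τ) / (θ₁(z|τ)·θ₁(ξ|τ))`. -/
noncomputable def lame (τ ξ z : ℂ) : ℂ :=
  theta1 τ (z - ξ) * deriv (theta1 τ) 0 / (theta1 τ z * theta1 τ ξ)

lemma logderiv_theta1_shift {τ : ℂ} (hτ : 0 < τ.im) {z : ℂ} (hz : theta1 τ z ≠ 0) :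
    deriv (theta1 τ) (z + τ) / theta1 τ (z + τ) =
      deriv (theta1 τ) z / theta1 τ z - 2 * (Real.pi : ℂ) * I := by
  rw [deriv_theta1_shift hτ, theta1_shift]
  have he : -Complex.exp (-(Real.pi : ℂ) * I * τ - 2 * (Real.pi : ℂ) * I * z) ≠ 0 := by
    simpa using Complex.exp_ne_zero (-(Real.pi : ℂ) * I * τ - 2 * (Real.pi : ℂ) * I * z)
  rw [mul_div_mul_left _ _ he, sub_div, mul_div_assoc, div_self hz, mul_one]

lemma lame_shift {τ : ℂ} (ξ z : ℂ) :
    lame τ ξ (z + τ) = Complex.exp (2 * (Real.pi : ℂ) * I * ξ) * lame τ ξ z := by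
  rw [lame, lame, show z + τ - ξ = (z - ξ) + τ by ring, theta1_shift, theta1_shift]
  set a := Complex.exp (-(Real.pi:ℂ) * I * τ - 2 * (Real.pi:ℂ) * I * (z - ξ)) with ha
  set b := Complex.exp (-(Real.pi:ℂ) * I * τ - 2 * (Real.pi:ℂ) * I * z) with hb
  set N := theta1 τ (z - ξ) * deriv (theta1 τ) 0
  set X := theta1 τ z
  set Y := theta1 τ ξ
  have hb0 : b ≠ 0 := Complex.exp_ne_zero _
  have he : Complex.exp (2 * (Real.pi:ℂ) * I * ξ) = a / b := by
    rw [eq_div_iff hb0, ha, hb, ← Complex.exp_add]; congr 1; ring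
  calc -a * theta1 τ (z - ξ) * deriv (theta1 τ) 0 / (-b * X * Y)
      = a * N / (b * (X * Y)) := by
        rw [show -a * theta1 τ (z - ξ) * deriv (theta1 τ) 0 = -(a * N) by rw [ha]; ring,
          show -b * X * Y = -(b * (X * Y)) by ring, neg_div_neg_eq]
    _ = a / b * (N / (X * Y)) := mul_div_mul_comm a N b (X * Y)
    _ = Complex.exp (2 * (Real.pi:ℂ) * I * ξ) * (N / (X * Y)) := by rw [he]

/-- The Lax matrix `L_z(z)` of the isomonodromic system on the `n`-punctured torus. -/
noncomputable def LaxLz (τ : ℂ) {N n : ℕ} (zs : Fin n → ℂ)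
    (A : Fin n → Matrix (Fin N) (Fin N) ℂ) (P Q : Fin N → ℂ) (z : ℂ) :
    Matrix (Fin N) (Fin N) ℂ :=
  Matrix.of fun i j =>
    if i = j then
      P i + ∑ k, (deriv (theta1 τ) (z - zs k) / theta1 τ (z - zs k)) * A k i i
    else
      -(∑ k, lame τ (Q j - Q i) (z - zs k) * A k i j)

/-- Twisted periodicity of the Lax matrix `L_z`:
`L_z(z+τ) = E⁻¹·L_z(z)·E` with `E = diag(exp(2πi Q_i))`. -/
theorem LaxLz_shift (τ : ℂ) (hτ : 0 < τ.im) (N n : ℕ) (hN : 1 ≤ N) (hn : 1 ≤ n)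
    (zs : Fin n → ℂ) (A : Fin n → Matrix (Fin N) (Fin N) ℂ)
    (hA : ∀ i, ∑ k, A k i i = 0)
    (P Q : Fin N → ℂ) (z : ℂ)
    (h1 : ∀ k, theta1 τ (z - zs k) ≠ 0)
    (h2 : ∀ k, theta1 τ (z + τ - zs k) ≠ 0)
    (h3 : ∀ i j, i ≠ j → theta1 τ (Q j - Q i) ≠ 0) :
    LaxLz τ zs A P Q (z + τ) =
      (Matrix.diagonal fun i => Complex.exp (2 * (Real.pi : ℂ) * Complex.I * Q i))⁻¹ *
        LaxLz τ zs A P Q z *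
        (Matrix.diagonal fun i => Complex.exp (2 * (Real.pi : ℂ) * Complex.I * Q i)) := by
  have hinv : (Matrix.diagonal fun i : Fin N =>
      Complex.exp (2 * (Real.pi : ℂ) * Complex.I * Q i))⁻¹ =
      Matrix.diagonal fun i => Complex.exp (-(2 * (Real.pi : ℂ) * Complex.I * Q i)) := by
    apply Matrix.inv_eq_right_inv
    rw [Matrix.diagonal_mul_diagonal]
    have : (fun i : Fin N => Complex.exp (2 * (Real.pi : ℂ) * Complex.I * Q i) *
        Complex.exp (-(2 * (Real.pi : ℂ) * Complex.I * Q i))) = fun _ => (1 : ℂ) := by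
      funext i; rw [← Complex.exp_add]; simp
    rw [this, Matrix.diagonal_one]
  rw [hinv]
  ext i j
  rw [Matrix.mul_diagonal, Matrix.diagonal_mul]
  simp only [LaxLz, Matrix.of_apply]
  by_cases hij : i = j
  · subst hij
    simp only [eq_self_iff_true, ite_true]
    have hsum : ∑ k, deriv (theta1 τ) (z + τ - zs k) / theta1 τ (z + τ - zs k) * A k i i
        = ∑ k, deriv (theta1 τ) (z - zs k) / theta1 τ (z - zs k) * A k i i := by
      calc ∑ k, deriv (theta1 τ) (z + τ - zs k) / theta1 τ (z + τ - zs k) * A k i i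
          = ∑ k, (deriv (theta1 τ) (z - zs k) / theta1 τ (z - zs k)
              - 2 * (Real.pi : ℂ) * Complex.I) * A k i i := by
            refine Finset.sum_congr rfl fun k _ => ?_
            rw [show z + τ - zs k = (z - zs k) + τ by ring, logderiv_theta1_shift hτ (h1 k)]
        _ = ∑ k, deriv (theta1 τ) (z - zs k) / theta1 τ (z - zs k) * A k i i
              - 2 * (Real.pi : ℂ) * Complex.I * ∑ k, A k i i := by
            simp only [sub_mul, Finset.sum_sub_distrib, Finset.mul_sum]
        _ = ∑ k, deriv (theta1 τ) (z - zs k) / theta1 τ (z - zs k) * A k i i := by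
            rw [hA i, mul_zero, sub_zero]
    rw [hsum]
    have hde : Complex.exp (-(2 * (Real.pi : ℂ) * Complex.I * Q i)) *
        Complex.exp (2 * (Real.pi : ℂ) * Complex.I * Q i) = 1 := by
      rw [← Complex.exp_add]; simp
    linear_combination -(P i + ∑ k, deriv (theta1 τ) (z - zs k) / theta1 τ (z - zs k)
      * A k i i) * hde
  · simp only [if_neg hij]
    have hs : ∑ k, lame τ (Q j - Q i) (z + τ - zs k) * A k i j
        = Complex.exp (2 * (Real.pi : ℂ) * Complex.I * (Q j - Q i)) *
          ∑ k, lame τ (Q j - Q i) (z - zs k) * A k i j := by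
      rw [Finset.mul_sum]
      refine Finset.sum_congr rfl fun k _ => ?_
      rw [show z + τ - zs k = (z - zs k) + τ by ring, lame_shift, mul_assoc]
    have hee : Complex.exp (2 * (Real.pi : ℂ) * Complex.I * (Q j - Q i)) =
        Complex.exp (-(2 * (Real.pi : ℂ) * Complex.I * Q i)) *
          Complex.exp (2 * (Real.pi : ℂ) * Complex.I * Q j) := by
      rw [← Complex.exp_add]; congr 1; ring
    rw [hs, hee]
    ring
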